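/- For even M and real s, the sum of squares of all elements of H^N(s) except the two end points equals the square of the sum of those same elements: ∑_{i=2}^{N−1} (H_i^N(s))² = (∑_{i=2}^{N−1} H_i^N(s))². Equivalently, the interior elements of H^N(s) form a Pythagorean n-tuple. -/

import Mathlib

/-!
The interior of `H^N(s)` is `2sF_1, …, 2sF_M, y, 2sF_{-M}, …, 2sF_{-1}` with
`y = sF_{M+1} - 2F_M`. Since `F_{-i} = (-1)^{i+1} F_i`, the sum of squares is `8s²A + y²` and the
square of the sum is `(2sT + y)²`, where `A = ∑ F_i²` and `T = ∑ (F_i + F_{-i})` over `1 ≤ i ≤ M`.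
Both sums telescope through the recurrence: `sA = F_M F_{M+1}` and, for even `M`, `sT = 2F_M`.
Hence `8s²A - 4s²T² - 4sTy = 8sF_M F_{M+1} - 16F_M² - 8F_M y = 0`.
-/

open Finset

section Fibonacci

variable {R : Type*} [CommRing R] {s : R} {F : ℤ → R}

theorem fib_neg_natCast (hrec : ∀ n : ℤ, F (n + 2) = s * F (n + 1) + F n) (h0 : F 0 = 0)
    (n : ℕ) : F (-n) = (-1) ^ (n + 1) * F n := by
  induction n using Nat.twoStepInduction with
  | zero => simp [h0]
  | one => simpa [h0] using (hrec (-1)).symm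
  | more n ih ih' =>
    have hneg := hrec (-(n + 2))
    have hpos := hrec n
    push_cast at ih' ⊢
    rw [show -((n : ℤ) + 2) + 2 = -n by ring, show -((n : ℤ) + 2) + 1 = -(n + 1) by ring,
      ih, ih'] at hneg
    rw [hpos]
    linear_combination -hneg

theorem fib_neg_sq (hrec : ∀ n : ℤ, F (n + 2) = s * F (n + 1) + F n) (h0 : F 0 = 0) (n : ℤ) :
    F (-n) ^ 2 = F n ^ 2 := by
  have key (k : ℕ) : F (-k) ^ 2 = F k ^ 2 := by
    rw [fib_neg_natCast hrec h0, mul_pow, ← pow_mul, Even.neg_one_pow ⟨k + 1, by ring⟩, one_mul]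
  obtain ⟨k, rfl | rfl⟩ := Int.eq_nat_or_neg n
  · exact key k
  · rw [neg_neg, key k]

theorem mul_sum_range_fib_sq (hrec : ∀ n : ℤ, F (n + 2) = s * F (n + 1) + F n) (n : ℕ) :
    s * ∑ i ∈ range n, F (i + 1) ^ 2 = F n * F (n + 1) - F 0 * F 1 := by
  have step (i : ℕ) : s * F (i + 1) ^ 2 = F (i + 1) * F (i + 2) - F i * F (i + 1) := by
    rw [hrec]; ring
  rw [mul_sum, sum_congr rfl fun i _ => step i]
  simpa [add_assoc, one_add_one_eq_two] using sum_range_sub (fun i : ℕ => F i * F (i + 1)) n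

theorem mul_sum_range_fib_add_fib_neg (hrec : ∀ n : ℤ, F (n + 2) = s * F (n + 1) + F n)
    (n : ℕ) : s * ∑ i ∈ range n, (F (i + 1) + F (-(i + 1))) =
      (F (n + 1) + F n - F (-n) - F (-(n + 1))) - (F 1 - F (-1)) := by
  have step (i : ℕ) : s * (F (i + 1) + F (-(i + 1))) =
      (F (i + 2) + F (i + 1) - F (-(i + 1)) - F (-(i + 2))) -
        (F (i + 1) + F i - F (-i) - F (-(i + 1))) := by
    have hneg := hrec (-(i + 2))
    rw [show -((i : ℤ) + 2) + 2 = -i by ring, show -((i : ℤ) + 2) + 1 = -(i + 1) by ring] at hneg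
    rw [hrec]
    linear_combination -hneg
  rw [mul_sum, sum_congr rfl fun i _ => step i]
  simpa [add_assoc, one_add_one_eq_two] using
    sum_range_sub (fun i : ℕ => F (i + 1) + F i - F (-i) - F (-(i + 1))) n

theorem mul_sum_range_fib_add_fib_neg_of_even (hrec : ∀ n : ℤ, F (n + 2) = s * F (n + 1) + F n)
    (h0 : F 0 = 0) {n : ℕ} (hn : Even n) :
    s * ∑ i ∈ range n, (F (i + 1) + F (-(i + 1))) = 2 * F n := by
  have hone := fib_neg_natCast hrec h0 1
  have hn' := fib_neg_natCast hrec h0 n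
  have hn1 := fib_neg_natCast hrec h0 (n + 1)
  rw [hn.add_one.neg_one_pow] at hn'
  rw [hn.add_one.add_one.neg_one_pow] at hn1
  push_cast at hone hn1
  rw [mul_sum_range_fib_add_fib_neg hrec, hn', hn1, hone]
  ring

end Fibonacci

section Huffman

variable {R : Type*} [CommRing R] {s : R} {F : ℤ → R}

def huffman (s : R) (F : ℤ → R) (M i : ℤ) : R :=
  if i = 1 then 1
  else if 2 ≤ i ∧ i ≤ M + 1 then 2 * s * F (i - 1)
  else if i = M + 2 then s * F (M + 1) - 2 * F M
  else if M + 3 ≤ i ∧ i ≤ 2 * M + 2 then 2 * s * F (i - (2 * M + 3))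
  else if i = 2 * M + 3 then -1
  else 0

theorem huffman_natCast_add_two {m i : ℕ} (hi : i < m) :
    huffman s F m (i + 2) = 2 * s * F (i + 1) := by
  rw [huffman, if_neg (by omega), if_pos (by omega)]
  ring_nf

theorem huffman_middle (m : ℕ) : huffman s F m (m + 2) = s * F (m + 1) - 2 * F m := by
  rw [huffman, if_neg (by omega), if_neg (by omega), if_pos rfl]

theorem huffman_two_mul_add_two_sub {m i : ℕ} (hi : i < m) :
    huffman s F m (2 * m + 2 - i) = 2 * s * F (-(i + 1)) := by
  rw [huffman, if_neg (by omega), if_neg (by omega), if_neg (by omega), if_pos (by omega)]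
  ring_nf

theorem sum_Icc_two_eq_sum_halves {β : Type*} [AddCommMonoid β] (f : ℤ → β) (m : ℕ) :
    ∑ i ∈ Icc (2 : ℤ) (2 * m + 2), f i =
      ∑ i ∈ range m, f (i + 2) + f (m + 2) + ∑ i ∈ range m, f (2 * m + 2 - i) := by
  rw [Int.Icc_eq_finset_map, sum_map, show (2 * (m : ℤ) + 2 + 1 - 2).toNat = m + 1 + m by omega,
    sum_range_add, sum_range_succ, ← sum_range_reflect (fun i : ℕ => f (2 * m + 2 - i)) m]
  simp only [Function.Embedding.trans_apply, Nat.castEmbedding_apply, addLeftEmbedding_apply]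
  congr 1
  · simp only [add_comm (2 : ℤ)]
  · exact sum_congr rfl fun i hi => congrArg f (by have := mem_range.1 hi; omega)

theorem sum_sq_huffman (hrec : ∀ n : ℤ, F (n + 2) = s * F (n + 1) + F n) (h0 : F 0 = 0) (m : ℕ) :
    ∑ i ∈ Icc (2 : ℤ) (2 * m + 2), huffman s F m i ^ 2 =
      8 * s ^ 2 * ∑ i ∈ range m, F (i + 1) ^ 2 + (s * F (m + 1) - 2 * F m) ^ 2 := by
  rw [sum_Icc_two_eq_sum_halves, huffman_middle, add_right_comm, ← sum_add_distrib, mul_sum]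
  congr 1
  refine sum_congr rfl fun i hi => ?_
  rw [huffman_natCast_add_two (mem_range.1 hi), huffman_two_mul_add_two_sub (mem_range.1 hi),
    mul_pow, mul_pow (2 * s), fib_neg_sq hrec h0]
  ring

theorem sum_huffman (m : ℕ) :
    ∑ i ∈ Icc (2 : ℤ) (2 * m + 2), huffman s F m i =
      2 * s * ∑ i ∈ range m, (F (i + 1) + F (-(i + 1))) + (s * F (m + 1) - 2 * F m) := by
  rw [sum_Icc_two_eq_sum_halves, huffman_middle, add_right_comm, ← sum_add_distrib, mul_sum]
  congr 1
  refine sum_congr rfl fun i hi => ?_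
  rw [huffman_natCast_add_two (mem_range.1 hi), huffman_two_mul_add_two_sub (mem_range.1 hi)]
  ring

end Huffman

theorem huffman_sum_of_squares_eq_square_of_sum_general (s : ℝ) (F : ℤ → ℝ)
    (h0 : F 0 = 0)
    (hrec : ∀ n : ℤ, F (n + 2) = s * F (n + 1) + F n)
    (M : ℤ) (hM2 : 2 ≤ M) (hMeven : Even M)
    (H : ℤ → ℝ)
    (hH : ∀ i : ℤ, H i =
      if i = 1 then 1
      else if 2 ≤ i ∧ i ≤ M + 1 then 2 * s * F (i - 1)
      else if i = M + 2 then s * F (M + 1) - 2 * F M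
      else if M + 3 ≤ i ∧ i ≤ 2 * M + 2 then 2 * s * F (i - (2 * M + 3))
      else if i = 2 * M + 3 then -1
      else 0) :
    ∑ i ∈ Finset.Icc (2 : ℤ) (2 * M + 2), (H i) ^ 2 =
      (∑ i ∈ Finset.Icc (2 : ℤ) (2 * M + 2), H i) ^ 2 := by
  obtain rfl : H = huffman s F M := funext hH
  lift M to ℕ using by omega
  have hsq := mul_sum_range_fib_sq hrec M
  rw [h0, zero_mul, sub_zero] at hsq
  have hlin := mul_sum_range_fib_add_fib_neg_of_even hrec h0 (Int.even_coe_nat M |>.1 hMeven)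
  rw [sum_sq_huffman hrec h0, sum_huffman]
  generalize ∑ i ∈ range M, (F (i + 1) + F (-(i + 1))) = T at hlin ⊢
  linear_combination 8 * s * hsq - 4 * s * (T + F (M + 1)) * hlin

theorem huffman_sum_of_squares_eq_square_of_sum (s : ℝ) (F : ℤ → ℝ)
    (h0 : F 0 = 0) (h1 : F 1 = 1)
    (hrec : ∀ n : ℤ, F (n + 2) = s * F (n + 1) + F n)
    (M : ℤ) (hM2 : 2 ≤ M) (hMeven : Even M)
    (H : ℤ → ℝ)
    (hH : ∀ i : ℤ, H i =
      if i = 1 then 1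
      else if 2 ≤ i ∧ i ≤ M + 1 then 2 * s * F (i - 1)
      else if i = M + 2 then s * F (M + 1) - 2 * F M
      else if M + 3 ≤ i ∧ i ≤ 2 * M + 2 then 2 * s * F (i - (2 * M + 3))
      else if i = 2 * M + 3 then -1
      else 0) :
    ∑ i ∈ Finset.Icc (2 : ℤ) (2 * M + 2), (H i) ^ 2 =
      (∑ i ∈ Finset.Icc (2 : ℤ) (2 * M + 2), H i) ^ 2 :=
  huffman_sum_of_squares_eq_square_of_sum_general s F h0 hrec M hM2 hMeven H hH
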